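/- arXiv:1304.2805 — 2 statements merged into one kernel-verified Lean document; each statement's English description precedes it below -/
import Mathlib

section
/- Let A and B be self-adjoint operators on a finite-dimensional Hilbert space with H = A + B, ‖B‖ ≤ C, and suppose A is diagonal with diagonal entries {d_k} satisfying |d_k - d_ℓ| ≥ 3C + 1 for k ≠ ℓ. Then for every eigenvalue E of H there is a unique index k with |E - d_k| ≤ C, and any corresponding normalized eigenvector ψ satisfies |ψ(k)|² ≥ 2/3. -/
/-!
Coordinatewise the eigenvalue equation says `(B ψ) k = (E - d_k) ψ k`, so
`∑ₖ |E - d_k|² |ψ k|² = ‖B ψ‖² ≤ C²`. Hence some `|E - d_k|` is at most `C`; by the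
`3C + 1` separation every other `|E - d_l|` is at least `2C + 1`, so the mass of `ψ` off `k`
is at most `C² / (2C + 1)² ≤ 1/3`.
-/

open Finset

section DiagonalWeight

variable {𝕜 ι : Type*} [RCLike 𝕜] [Fintype ι] {φ ψ : EuclideanSpace 𝕜 ι} {w : ι → ℝ}

theorem sq_mul_sum_norm_sq_le_norm_sq (hφ : ∀ k, φ k = (w k : 𝕜) * ψ k) {s : Finset ι}
    {M : ℝ} (hM0 : 0 ≤ M) (hM : ∀ l ∈ s, M ≤ |w l|) :
    M ^ 2 * ∑ l ∈ s, ‖ψ l‖ ^ 2 ≤ ‖φ‖ ^ 2 := by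
  rw [EuclideanSpace.norm_sq_eq, mul_sum]
  calc ∑ l ∈ s, M ^ 2 * ‖ψ l‖ ^ 2 ≤ ∑ l ∈ s, ‖φ l‖ ^ 2 := sum_le_sum fun l hl => by
        rw [hφ, norm_mul, RCLike.norm_ofReal, mul_pow]
        gcongr
        exact hM l hl
    _ ≤ ∑ l, ‖φ l‖ ^ 2 := sum_le_sum_of_subset_of_nonneg (subset_univ s) fun _ _ _ => by positivity

theorem exists_abs_le_of_norm_le (hφ : ∀ k, φ k = (w k : 𝕜) * ψ k) (hψ : ψ ≠ 0) {C : ℝ}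
    (hC : ‖φ‖ ≤ C * ‖ψ‖) : ∃ k, |w k| ≤ C := by
  obtain ⟨j, -⟩ : ∃ j, ψ j ≠ 0 := by
    by_contra! h
    exact hψ (PiLp.ext h)
  obtain ⟨k, -, hk⟩ := exists_min_image univ (fun k => |w k|) ⟨j, mem_univ j⟩
  have hmass := sq_mul_sum_norm_sq_le_norm_sq hφ (s := univ) (abs_nonneg (w k)) fun l _ => hk l (mem_univ l)
  rw [← EuclideanSpace.norm_sq_eq, ← mul_pow] at hmass
  have hle : |w k| * ‖ψ‖ ≤ C * ‖ψ‖ :=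
    (pow_le_pow_iff_left₀ (by positivity) (norm_nonneg φ) two_ne_zero).1 hmass |>.trans hC
  exact ⟨k, le_of_mul_le_mul_right hle (norm_pos_iff.2 hψ)⟩

end DiagonalWeight

theorem le_abs_sub_of_abs_sub_le {x a b C D : ℝ} (hxa : |x - a| ≤ C) (hab : D ≤ |a - b|) :
    D - C ≤ |x - b| := by
  have : |a - b| ≤ |x - b| + |x - a| := by
    simpa using abs_sub (x - b) (x - a)
  linarith

theorem stmt5_general
    (n : ℕ) (C : ℝ)
    (A B : EuclideanSpace ℂ (Fin n) →L[ℂ] EuclideanSpace ℂ (Fin n))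
    (dk : Fin n → ℝ)
    (hA : ∀ (v : EuclideanSpace ℂ (Fin n)) (k : Fin n), (A v) k = (dk k : ℂ) * v k)
    (hBnorm : ‖B‖ ≤ C)
    (hsep : ∀ k l : Fin n, k ≠ l → 3 * C + 1 ≤ |dk k - dk l|)
    (E : ℝ) (ψ : EuclideanSpace ℂ (Fin n)) (hψ : ‖ψ‖ = 1)
    (heig : (A + B) ψ = (E : ℂ) • ψ) :
    (∃! k : Fin n, |E - dk k| ≤ C) ∧
      ∀ k : Fin n, |E - dk k| ≤ C → (2 : ℝ) / 3 ≤ ‖ψ k‖ ^ 2 := by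
  have hcoord : ∀ k, (B ψ) k = ((E - dk k : ℝ) : ℂ) * ψ k := fun k => by
    have h := congrArg (fun v => v k) heig
    simp only [add_apply, PiLp.add_apply, PiLp.smul_apply, smul_eq_mul,
      hA] at h
    push_cast
    linear_combination h
  have hBψ : ‖B ψ‖ ≤ C * ‖ψ‖ := B.le_opNorm ψ |>.trans (by gcongr)
  have hC : 0 ≤ C := (norm_nonneg B).trans hBnorm
  have hfar : ∀ k l, |E - dk k| ≤ C → l ≠ k → 2 * C + 1 ≤ |E - dk l| := fun k l hk hlk => by
    linarith [le_abs_sub_of_abs_sub_le hk (hsep k l hlk.symm)]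
  obtain ⟨k, hk⟩ := exists_abs_le_of_norm_le hcoord (by rintro rfl; simp at hψ) hBψ
  have huniq : ∀ l, |E - dk l| ≤ C → l = k := fun l hl => by
    by_contra hlk
    linarith [hfar k l hk hlk]
  refine ⟨⟨k, hk, huniq⟩, fun l hl => ?_⟩
  obtain rfl := huniq l hl
  have htail := sq_mul_sum_norm_sq_le_norm_sq hcoord (s := univ.erase l) (by positivity)
    fun m hm => hfar l m hl (ne_of_mem_erase hm)
  have htotal : ‖ψ l‖ ^ 2 + ∑ m ∈ univ.erase l, ‖ψ m‖ ^ 2 = 1 := by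
    rw [add_sum_erase _ (fun m => ‖ψ m‖ ^ 2) (mem_univ l), ← EuclideanSpace.norm_sq_eq, hψ, one_pow]
  rw [hψ, mul_one] at hBψ
  nlinarith [pow_le_pow_left₀ (norm_nonneg _) hBψ 2]

/-- **Localization of eigenvectors for diagonally dominant operators.**
Let `H = A + B` act on `ℂ^n` (with the Euclidean norm), where `A` is the diagonal
operator with real entries `dk`, `B` is self-adjoint with `‖B‖ ≤ C`, and the
diagonal entries satisfy `|dk k - dk l| ≥ 3C + 1` for `k ≠ l`.  Then for every
eigenvalue `E` of `H` there is a unique index `k` with `|E - dk k| ≤ C`, and any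
normalized eigenvector `ψ` for `E` satisfies `|ψ k|² ≥ 2/3` at that index. -/
theorem stmt5
    (n : ℕ) (C : ℝ) (hC : 0 < C)
    (A B : EuclideanSpace ℂ (Fin n) →L[ℂ] EuclideanSpace ℂ (Fin n))
    (dk : Fin n → ℝ)
    (hA : ∀ (v : EuclideanSpace ℂ (Fin n)) (k : Fin n), (A v) k = (dk k : ℂ) * v k)
    (hB : IsSelfAdjoint B) (hBnorm : ‖B‖ ≤ C)
    (hsep : ∀ k l : Fin n, k ≠ l → 3 * C + 1 ≤ |dk k - dk l|)
    (E : ℝ) (ψ : EuclideanSpace ℂ (Fin n)) (hψ : ‖ψ‖ = 1)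
    (heig : (A + B) ψ = (E : ℂ) • ψ) :
    (∃! k : Fin n, |E - dk k| ≤ C) ∧
      ∀ k : Fin n, |E - dk k| ≤ C → (2 : ℝ) / 3 ≤ ‖ψ k‖ ^ 2 :=
  stmt5_general n C A B dk hA hBnorm hsep E ψ hψ heig
end

section
/- Let V be a p-periodic potential on ℤ^d, fix x' ∈ [0,1/p_1) × ... × [0,1/p_{d-1}) and E ∈ ℝ. Then the number of x_d ∈ [0, 1/p_d) such that E is an eigenvalue of the Floquet operator Ĥ_{(x',x_d)} is at most 2·p_1···p_{d-1}, provided x_d ↦ det(Ĥ_{(x',x_d)} - E) is not identically zero. -/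
/-!
With `z = exp (2πit)` and `w_k = exp (2πiθ_k)`, each diagonal entry `2 cos (2π(t + θ_k))` equals
`z w_k + (z w_k)⁻¹`, so `z ^ P * det (Ĥ_{(x',t)} - E)` is a polynomial in `z` of degree at most `2P`,
nonzero because the determinant does not vanish identically. Since `t ↦ exp (2πit)` is injective on
`[0, 1)`, the determinant has at most `2P` zeros there. Translating `k_d ↦ k_d + 1` conjugates
`Ĥ_{(x',t)}` into `Ĥ_{(x',t + 1/p_d)}`, so the determinant is `1/p_d`-periodic and every zero in
`[0, 1/p_d)` yields `p_d` zeros in `[0, 1)`.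
-/

open Complex Polynomial Matrix Function
open scoped Real

section Circle

open Set

lemma injOn_exp_two_pi_I_mul : InjOn (fun t : ℝ => cexp (2 * π * I * t)) (Ico 0 1) := by
  intro x hx y hy h
  have hinj := Circle.exp_injOn_Ico (a := 0) (b := 2 * π) (by simp)
  have := hinj (x₁ := 2 * π * x) (x₂ := 2 * π * y)
    ⟨by nlinarith [hx.1, Real.pi_pos], by nlinarith [hx.2, Real.pi_pos]⟩
    ⟨by nlinarith [hy.1, Real.pi_pos], by nlinarith [hy.2, Real.pi_pos]⟩
    (Circle.ext (by simpa [Circle.coe_exp, mul_comm, mul_left_comm] using h))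
  simpa [Real.pi_ne_zero] using this

lemma zeros_Ico_finite_and_ncard_le_natDegree {f : ℝ → ℂ} {Q : ℂ[X]} (hQ : Q ≠ 0)
    (hf : ∀ t : ℝ, f t = 0 → Q.IsRoot (cexp (2 * π * I * t))) :
    {t ∈ Ico (0 : ℝ) 1 | f t = 0}.Finite ∧
      {t ∈ Ico (0 : ℝ) 1 | f t = 0}.ncard ≤ Q.natDegree := by
  have hmaps : MapsTo (fun t : ℝ => cexp (2 * π * I * t)) {t ∈ Ico (0 : ℝ) 1 | f t = 0}
      (Q.roots.toFinset : Set ℂ) := fun t ht => by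
    simpa [Polynomial.mem_roots hQ] using hf t ht.2
  have hinj := injOn_exp_two_pi_I_mul.mono (sep_subset (Ico (0 : ℝ) 1) fun t => f t = 0)
  refine ⟨Finite.of_injOn hmaps hinj (Finset.finite_toSet _), ?_⟩
  calc _ ≤ (Q.roots.toFinset : Set ℂ).ncard := ncard_le_ncard_of_injOn _ hmaps hinj
    _ = Q.roots.toFinset.card := ncard_coe_finset _
    _ ≤ Q.roots.card := Multiset.toFinset_card_le _
    _ ≤ Q.natDegree := Q.card_roots'

lemma ncard_zeros_Ico_mul_le_of_periodic {f : ℝ → ℂ} {n : ℕ} (hn : 0 < n)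
    (hf : Periodic f (1 / n)) (hfin : {t ∈ Ico (0 : ℝ) 1 | f t = 0}.Finite) :
    {t ∈ Ico (0 : ℝ) (1 / n) | f t = 0}.ncard * n ≤ {t ∈ Ico (0 : ℝ) 1 | f t = 0}.ncard := by
  have hn' : (0 : ℝ) < n := by exact_mod_cast hn
  have hfloor : ∀ t ∈ Ico (0 : ℝ) (1 / n), ∀ m : ℕ, ⌊n * (t + m * (1 / n))⌋₊ = m := by
    rintro t ⟨ht0, ht1⟩ m
    rw [lt_div_iff₀ hn'] at ht1
    rw [Nat.floor_eq_iff (by positivity)]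
    constructor <;> field_simp <;> nlinarith
  calc _ = ({t ∈ Ico (0 : ℝ) (1 / n) | f t = 0} ×ˢ Iio n).ncard := by
        rw [ncard_prod, ← Finset.coe_range, ncard_coe_finset, Finset.card_range]
    _ ≤ _ := by
      refine ncard_le_ncard_of_injOn (fun q => q.1 + q.2 * (1 / n)) ?_ ?_ hfin
      · rintro ⟨t, m⟩ ⟨⟨⟨ht0, ht1⟩, hft⟩, hm⟩
        refine ⟨⟨by positivity, ?_⟩, by rwa [← hf.nat_mul m t] at hft⟩
        have : (m : ℝ) + 1 ≤ n := by exact_mod_cast hm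
        calc t + m * (1 / n) < (1 + m) * (1 / n) := by linarith
          _ ≤ 1 := by rw [one_div, ← div_eq_mul_inv, div_le_one hn']; linarith
      · rintro ⟨t, m⟩ ⟨⟨ht, -⟩, -⟩ ⟨t', m'⟩ ⟨⟨ht', -⟩, -⟩ h
        have hm : m = m' := by
          rw [← hfloor t ht m, ← hfloor t' ht' m']
          exact congrArg (fun s : ℝ => ⌊(n : ℝ) * s⌋₊) h
        subst hm
        simpa using h

lemma cos_two_pi_mul_eq_of_exp_eq {x y : ℂ} (h : cexp (2 * π * I * x) = cexp (2 * π * I * y)) :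
    cos (2 * π * x) = cos (2 * π * y) := by
  simp only [Complex.cos, neg_mul, Complex.exp_neg]
  rw [show 2 * π * x * I = 2 * π * I * x by ring, show 2 * π * y * I = 2 * π * I * y by ring, h]

lemma two_mul_cos_two_pi_mul_add (t θ : ℂ) :
    2 * cos (2 * π * (t + θ)) =
      cexp (2 * π * I * t) * cexp (2 * π * I * θ) +
        (cexp (2 * π * I * t) * cexp (2 * π * I * θ))⁻¹ := by
  rw [Complex.cos, ← Complex.exp_add, ← Complex.exp_neg]
  ring_nf

end Circle

section DetPoly

variable {ι : Type*} [Fintype ι] [DecidableEq ι]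

lemma natDegree_det_le_of_forall_natDegree_le {R : Type*} [CommRing R] {M : Matrix ι ι R[X]}
    {m : ℕ} (hM : ∀ i j, (M i j).natDegree ≤ m) : M.det.natDegree ≤ Fintype.card ι * m := by
  rw [det_apply']
  refine natDegree_sum_le_of_forall_le _ _ fun σ _ => ?_
  refine natDegree_mul_le.trans ?_
  rw [natDegree_intCast, zero_add]
  refine (natDegree_prod_le _ _).trans ?_
  simpa using Finset.sum_le_card_nsmul Finset.univ _ m fun i _ => hM (σ i) i

lemma periodic_det_add_diagonal {α R : Type*} [Add α] [CommRing R] {A : Matrix ι ι R}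
    {g : α → ι → R} {c : α} (σ : ι ≃ ι) (hA : ∀ i j, A (σ i) (σ j) = A i j)
    (hg : ∀ t i, g (t + c) i = g t (σ i)) :
    Periodic (fun t => (A + diagonal (g t)).det) c := fun t => by
  have : A + diagonal (g (t + c)) = (A + diagonal (g t)).submatrix σ σ := by
    ext i j
    simp only [submatrix_apply, Matrix.add_apply, diagonal_apply, σ.injective.eq_iff, hA, hg]
  simp only [this, det_submatrix_equiv_self]

variable {K : Type*} [Field K]

/-- `z ^ card ι * det (A + diagonal (z u + (z u)⁻¹))`, cleared of denominators. -/
noncomputable def cosDetPoly (A : Matrix ι ι K) (u : ι → K) : K[X] :=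
  ((X : K[X]) • A.map C + diagonal fun i => C (u i) * X ^ 2 + C (u i)⁻¹).det

lemma natDegree_cosDetPoly_le (A : Matrix ι ι K) (u : ι → K) :
    (cosDetPoly A u).natDegree ≤ Fintype.card ι * 2 := by
  refine natDegree_det_le_of_forall_natDegree_le fun i j => ?_
  rw [Matrix.add_apply, diagonal_apply]
  split_ifs <;> simp only [Matrix.smul_apply, map_apply, smul_eq_mul, add_zero] <;> compute_degree!

lemma eval_cosDetPoly (A : Matrix ι ι K) (u : ι → K) {z : K} (hz : z ≠ 0) :
    (cosDetPoly A u).eval z =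
      z ^ Fintype.card ι * (A + diagonal fun i => z * u i + (z * u i)⁻¹).det := by
  rw [cosDetPoly, ← coe_evalRingHom, RingHom.map_det, ← det_smul]
  congr 1
  ext i j
  simp only [RingHom.mapMatrix_apply, map_apply, Matrix.add_apply, Matrix.smul_apply,
    diagonal_apply, smul_eq_mul, mul_add, coe_evalRingHom, eval_add, eval_mul, eval_C, eval_X]
  split_ifs
  · rw [mul_inv, mul_add z, mul_inv_cancel_left₀ hz]
    simp only [eval_add, eval_mul, eval_C, eval_pow, eval_X]
    ring
  · simp

end DetPoly

section CosDet

variable {ι : Type*} [Fintype ι] [DecidableEq ι]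

noncomputable def cosDet (A : Matrix ι ι ℂ) (θ : ι → ℂ) (t : ℝ) : ℂ :=
  (A + diagonal fun i => 2 * cos (2 * π * (t + θ i))).det

lemma eval_cosDetPoly_exp (A : Matrix ι ι ℂ) (θ : ι → ℂ) (t : ℝ) :
    (cosDetPoly A fun i => cexp (2 * π * I * θ i)).eval (cexp (2 * π * I * t)) =
      cexp (2 * π * I * t) ^ Fintype.card ι * cosDet A θ t := by
  simp only [eval_cosDetPoly _ _ (Complex.exp_ne_zero _), cosDet, two_mul_cos_two_pi_mul_add]

theorem cosDet_zeros_finite_and_ncard_le {A : Matrix ι ι ℂ} {θ : ι → ℂ}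
    (hne : ∃ t, cosDet A θ t ≠ 0) :
    {t ∈ Set.Ico (0 : ℝ) 1 | cosDet A θ t = 0}.Finite ∧
      {t ∈ Set.Ico (0 : ℝ) 1 | cosDet A θ t = 0}.ncard ≤ Fintype.card ι * 2 := by
  have hQ : (cosDetPoly A fun i => cexp (2 * π * I * θ i)) ≠ 0 := by
    obtain ⟨t, ht⟩ := hne
    rintro hQ
    have := eval_cosDetPoly_exp A θ t
    rw [hQ, eval_zero, eq_comm] at this
    exact ht ((mul_eq_zero.1 this).resolve_left (pow_ne_zero _ (Complex.exp_ne_zero _)))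
  obtain ⟨hfin, hcard⟩ := zeros_Ico_finite_and_ncard_le_natDegree hQ
    (f := cosDet A θ) fun t ht => by rw [IsRoot, eval_cosDetPoly_exp, ht, mul_zero]
  exact ⟨hfin, hcard.trans (natDegree_cosDetPoly_le _ _)⟩

lemma periodic_cosDet {A : Matrix ι ι ℂ} {θ : ι → ℂ} {c : ℝ} (σ : ι ≃ ι)
    (hA : ∀ i j, A (σ i) (σ j) = A i j)
    (hθ : ∀ i, cexp (2 * π * I * θ (σ i)) = cexp (2 * π * I * (θ i + c))) :
    Periodic (cosDet A θ) c :=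
  periodic_det_add_diagonal σ hA fun t i => by
    rw [cos_two_pi_mul_eq_of_exp_eq]
    simp only [Complex.ofReal_add, mul_add, Complex.exp_add, hθ]
    ring

end CosDet

section Floquet

variable {d : ℕ} {p : Fin (d + 1) → ℕ}

noncomputable def floquetMatrix (Vhat : (∀ j, ZMod (p j)) → ℂ) (x' : Fin d → ℝ) (t : ℝ) :
    Matrix (∀ j, ZMod (p j)) (∀ j, ZMod (p j)) ℂ :=
  of fun k l =>
    (if k = l then
      ∑ j : Fin (d + 1),
        2 * cos (2 * π * ((if h : (j : ℕ) < d then (x' ⟨j, h⟩ : ℂ) else (t : ℂ)) +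
          ((k j).val : ℂ) / (p j : ℂ)))
      else 0) + Vhat (l - k)

noncomputable def transverseMatrix (Vhat : (∀ j, ZMod (p j)) → ℂ) (x' : Fin d → ℝ) (E : ℝ) :
    Matrix (∀ j, ZMod (p j)) (∀ j, ZMod (p j)) ℂ :=
  of fun k l =>
    (if k = l then
      ∑ j : Fin d, 2 * cos (2 * π * ((x' j : ℂ) + ((k j.castSucc).val : ℂ) / (p j.castSucc : ℂ)))
        - E
      else 0) + Vhat (l - k)

noncomputable def lastPhase (k : ∀ j, ZMod (p j)) : ℂ := (k (Fin.last d)).val / p (Fin.last d)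

lemma det_floquetMatrix_sub_smul_one [∀ j, NeZero (p j)] (Vhat : (∀ j, ZMod (p j)) → ℂ)
    (x' : Fin d → ℝ) (E t : ℝ) :
    (floquetMatrix Vhat x' t - (E : ℂ) • 1).det =
      cosDet (transverseMatrix Vhat x' E) lastPhase t := by
  rw [cosDet]
  congr 1
  ext k l
  simp only [floquetMatrix, transverseMatrix, lastPhase, Matrix.sub_apply, Matrix.add_apply,
    Matrix.smul_apply, of_apply, one_apply, diagonal_apply, smul_eq_mul, Fin.sum_univ_castSucc,
    Fin.val_castSucc, Fin.is_lt, dif_pos, Fin.val_last, lt_irrefl, dif_neg, not_false_eq_true]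
  split_ifs <;> ring

lemma transverseMatrix_add_single_last (Vhat : (∀ j, ZMod (p j)) → ℂ) (x' : Fin d → ℝ) (E : ℝ)
    (k l : ∀ j, ZMod (p j)) :
    transverseMatrix Vhat x' E (k + Pi.single (Fin.last d) 1) (l + Pi.single (Fin.last d) 1) =
      transverseMatrix Vhat x' E k l := by
  have hcast : ∀ j : Fin d, Pi.single (M := fun j => ZMod (p j)) (Fin.last d) 1 j.castSucc = 0 :=
    fun j => Pi.single_eq_of_ne (Fin.castSucc_lt_last j).ne _
  simp only [transverseMatrix, of_apply, add_left_inj, add_sub_add_right_eq_sub, Pi.add_apply,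
    hcast, add_zero]

lemma exp_lastPhase_add_single_last [NeZero (p (Fin.last d))] (k : ∀ j, ZMod (p j)) :
    cexp (2 * π * I * lastPhase (k + Pi.single (Fin.last d) 1)) =
      cexp (2 * π * I * (lastPhase k + (1 / p (Fin.last d) : ℝ))) := by
  have hone : (ZMod.toCircle (1 : ZMod (p (Fin.last d))) : ℂ) =
      cexp (2 * π * I * 1 / p (Fin.last d)) := by
    exact_mod_cast ZMod.toCircle_natCast (N := p (Fin.last d)) 1
  have h := congrArg Subtype.val (AddChar.map_add_eq_mul ZMod.toCircle (k (Fin.last d)) 1)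
  rw [Circle.coe_mul, ZMod.toCircle_apply, ZMod.toCircle_apply, hone, ← Complex.exp_add] at h
  simp only [lastPhase, Pi.add_apply, Pi.single_eq_same]
  rw [← mul_div_assoc, h]
  push_cast
  ring_nf

lemma card_pi_zmod [∀ j, NeZero (p j)] :
    Fintype.card (∀ j, ZMod (p j)) = (∏ j : Fin d, p j.castSucc) * p (Fin.last d) := by
  simp only [Fintype.card_pi, ZMod.card, Fin.prod_univ_castSucc]

end Floquet

theorem stmt13_general
    (d : ℕ) (p : Fin (d + 1) → ℕ) [∀ j, NeZero (p j)]
    (Vhat : (∀ j, ZMod (p j)) → ℂ)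
    (x' : Fin d → ℝ)
    (E : ℝ)
    (M : ℝ → Matrix (∀ j, ZMod (p j)) (∀ j, ZMod (p j)) ℂ)
    (hM : ∀ (t : ℝ) (k l : ∀ j, ZMod (p j)), M t k l =
      (if k = l then
        ∑ j : Fin (d + 1),
          2 * Complex.cos (2 * Real.pi *
            ((if h : (j : ℕ) < d then (x' ⟨j, h⟩ : ℂ) else (t : ℂ)) +
              ((k j).val : ℂ) / (p j : ℂ)))
        else 0) + Vhat (l - k))
    (hne : ∃ t : ℝ, ((M t) - (E : ℂ) • (1 : Matrix _ _ ℂ)).det ≠ 0) :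
    {t : ℝ | t ∈ Set.Ico (0 : ℝ) (1 / p (Fin.last d)) ∧
        ((M t) - (E : ℂ) • (1 : Matrix _ _ ℂ)).det = 0}.Finite ∧
      {t : ℝ | t ∈ Set.Ico (0 : ℝ) (1 / p (Fin.last d)) ∧
        ((M t) - (E : ℂ) • (1 : Matrix _ _ ℂ)).det = 0}.ncard ≤
        2 * ∏ j : Fin d, p j.castSucc := by
  obtain rfl : M = floquetMatrix Vhat x' := funext fun t => Matrix.ext (hM t)
  simp only [det_floquetMatrix_sub_smul_one] at hne ⊢
  set n := p (Fin.last d)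
  have hn : 0 < n := Nat.pos_of_neZero n
  obtain ⟨hfin, hcard⟩ := cosDet_zeros_finite_and_ncard_le hne
  have hper := periodic_cosDet (c := 1 / n) (Equiv.addRight (Pi.single (Fin.last d) 1))
    (transverseMatrix_add_single_last Vhat x' E) exp_lastPhase_add_single_last
  have hsub : Set.Ico (0 : ℝ) (1 / n) ⊆ Set.Ico 0 1 :=
    Set.Ico_subset_Ico_right (div_le_one_of_le₀ (by exact_mod_cast hn) (Nat.cast_nonneg _))
  have hmul := (ncard_zeros_Ico_mul_le_of_periodic hn hper hfin).trans hcard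
  rw [card_pi_zmod] at hmul
  exact ⟨hfin.subset fun t ht => ⟨hsub ht.1, ht.2⟩, Nat.le_of_mul_le_mul_right (by linarith) hn⟩

/-- **Counting quasi-momenta with a prescribed Floquet eigenvalue.**
Let `V` be a `p`-periodic potential (given through its Fourier coefficients
`V̂ : ∏_j ZMod (p j) → ℂ` on `𝔹_p`), fix `x' ∈ [0,1/p_1) × ⋯ × [0,1/p_d)` for
the first `d` coordinates and `E ∈ ℝ`.  The Floquet matrix at `(x', t)` is
`Ĥ_{(x',t)} k l = δ_{kl} ∑_j 2cos(2π(x_j + k_j/p_j)) + V̂(l - k)` where the last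
quasi-momentum coordinate is `t`.  Provided `t ↦ det(Ĥ_{(x',t)} - E)` is not
identically zero, the number of `t ∈ [0, 1/p_{d+1})` for which `E` is an
eigenvalue of `Ĥ_{(x',t)}` is at most `2 p_1 ⋯ p_d`. -/
theorem stmt13
    (d : ℕ) (p : Fin (d + 1) → ℕ) [∀ j, NeZero (p j)]
    (Vhat : (∀ j, ZMod (p j)) → ℂ)
    (x' : Fin d → ℝ) (hx' : ∀ j : Fin d, x' j ∈ Set.Ico (0 : ℝ) (1 / p j.castSucc))
    (E : ℝ)
    (M : ℝ → Matrix (∀ j, ZMod (p j)) (∀ j, ZMod (p j)) ℂ)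
    (hM : ∀ (t : ℝ) (k l : ∀ j, ZMod (p j)), M t k l =
      (if k = l then
        ∑ j : Fin (d + 1),
          2 * Complex.cos (2 * Real.pi *
            ((if h : (j : ℕ) < d then (x' ⟨j, h⟩ : ℂ) else (t : ℂ)) +
              ((k j).val : ℂ) / (p j : ℂ)))
        else 0) + Vhat (l - k))
    (hne : ∃ t : ℝ, ((M t) - (E : ℂ) • (1 : Matrix _ _ ℂ)).det ≠ 0) :
    {t : ℝ | t ∈ Set.Ico (0 : ℝ) (1 / p (Fin.last d)) ∧
        ((M t) - (E : ℂ) • (1 : Matrix _ _ ℂ)).det = 0}.Finite ∧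
      {t : ℝ | t ∈ Set.Ico (0 : ℝ) (1 / p (Fin.last d)) ∧
        ((M t) - (E : ℂ) • (1 : Matrix _ _ ℂ)).det = 0}.ncard ≤
        2 * ∏ j : Fin d, p j.castSucc :=
  stmt13_general d p Vhat x' E M hM hne
end
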